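/- If i is a call position of a word σ with matching return j, and i' is a call position with i < i' < j, then the matching return of i' (if it exists) is strictly smaller than j; in other words, matched call-return pairs are well-nested. -/

import Mathlib

/-! Count calls against returns. Every prefix of a well-matched word has at least as many calls
as returns, and the whole word has equally many; hence in `σ[i+1, j-1]` the part `σ[i'+1, j-1]`
after the call `i'` has more returns than calls. If `j ≤ j'`, that part is a prefix of the
well-matched word `σ[i'+1, j'-1]`, so it also has at least as many calls as returns. -/

inductive SymKind where
  | call | ret | intl
deriving DecidableEq

/-- Well-matched words over a pushdown alphabet, where `k` assigns to each
letter its kind (call, return, or internal). -/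
inductive WellMatched {A : Type*} (k : A → SymKind) : List A → Prop
  | nil : WellMatched k []
  | int {a : A} {s : List A} : k a = SymKind.intl → WellMatched k s →
      WellMatched k (a :: s)
  | matched {c r : A} {s s' : List A} : k c = SymKind.call → k r = SymKind.ret →
      WellMatched k s → WellMatched k s' →
      WellMatched k (c :: (s ++ r :: s'))

/-- Number of call symbols in a finite word. -/
def callCount {A : Type*} (k : A → SymKind) (s : List A) : ℕ :=
  s.countP (fun a => decide (k a = SymKind.call))

/-- Number of return symbols in a finite word. -/
def retCount {A : Type*} (k : A → SymKind) (s : List A) : ℕ :=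
  s.countP (fun a => decide (k a = SymKind.ret))

/-- The finite subword `σ[i, j-1]` of the infinite word `σ` (letters at
positions `i, i+1, ..., j-1`). -/
def wordSlice {A : Type*} (σ : ℕ → A) (i j : ℕ) : List A :=
  (List.range (j - i)).map fun n => σ (i + n)

/-- `j` is a matching return of position `i`: `j > i`, `j` is a return
position, and the subword `σ[i+1, j-1]` is well-matched. -/
def MatchRet {A : Type*} (k : A → SymKind) (σ : ℕ → A) (i j : ℕ) : Prop :=
  i < j ∧ k (σ j) = SymKind.ret ∧ WellMatched k (wordSlice σ (i + 1) j)

/-- The abstract-successor relation `SUCC(abs, σ, i) = j`. -/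
def AbsSucc {A : Type*} (k : A → SymKind) (σ : ℕ → A) (i j : ℕ) : Prop :=
  if k (σ i) = SymKind.call then MatchRet k σ i j
  else j = i + 1 ∧ k (σ (i + 1)) ≠ SymKind.ret

/-- `j` is a candidate caller of `i`: a call position `j < i` whose abstract
successor is undefined or greater than `i`. -/
def CallerCand {A : Type*} (k : A → SymKind) (σ : ℕ → A) (i j : ℕ) : Prop :=
  j < i ∧ k (σ j) = SymKind.call ∧ ∀ m, AbsSucc k σ j m → i < m

/-- `j` is the caller of `i`: the greatest candidate caller. -/
def Caller {A : Type*} (k : A → SymKind) (σ : ℕ → A) (i j : ℕ) : Prop :=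
  CallerCand k σ i j ∧ ∀ j', CallerCand k σ i j' → j' ≤ j

/-- `S` is a maximal abstract path (MAP): the set of positions reachable via
the abstract successor from a position `i0` with no abstract predecessor. -/
def IsMAP {A : Type*} (k : A → SymKind) (σ : ℕ → A) (S : Set ℕ) : Prop :=
  ∃ i0, (¬ ∃ p, AbsSucc k σ p i0) ∧
    S = {j | Relation.ReflTransGen (AbsSucc k σ) i0 j}

/-- The set of positions of the (unique) maximal abstract path visiting `i`. -/
def PosA {A : Type*} (k : A → SymKind) (σ : ℕ → A) (i : ℕ) : Set ℕ :=
  {j | Relation.ReflTransGen (AbsSucc k σ) i j ∨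
       Relation.ReflTransGen (AbsSucc k σ) j i}

/-- The set of positions of the caller path of `σ` from `i`. -/
def PosC {A : Type*} (k : A → SymKind) (σ : ℕ → A) (i : ℕ) : Set ℕ :=
  {j | Relation.ReflTransGen (fun a b => Caller k σ a b) i j}

theorem List.prefix_or_eq_append_of_prefix_append {α : Type*} {p s t : List α}
    (h : p <+: s ++ t) : p <+: s ∨ ∃ q, q <+: t ∧ p = s ++ q := by
  obtain ⟨u, hu⟩ := h
  rcases List.append_eq_append_iff.mp hu with ⟨v, rfl, -⟩ | ⟨q, rfl, rfl⟩
  · exact .inl (List.prefix_append p v)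
  · exact .inr ⟨q, List.prefix_append q u, rfl⟩

section Counting

variable {A : Type*} {k : A → SymKind}

@[simp]
lemma callCount_nil : callCount k [] = 0 := rfl

@[simp]
lemma retCount_nil : retCount k [] = 0 := rfl

@[simp]
lemma callCount_cons (a : A) (s : List A) :
    callCount k (a :: s) = callCount k s + if k a = .call then 1 else 0 := by
  simp [callCount, List.countP_cons]

@[simp]
lemma retCount_cons (a : A) (s : List A) :
    retCount k (a :: s) = retCount k s + if k a = .ret then 1 else 0 := by
  simp [retCount, List.countP_cons]

@[simp]
lemma callCount_append (s t : List A) :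
    callCount k (s ++ t) = callCount k s + callCount k t :=
  List.countP_append ..

@[simp]
lemma retCount_append (s t : List A) :
    retCount k (s ++ t) = retCount k s + retCount k t :=
  List.countP_append ..

lemma WellMatched.callCount_eq_retCount {s : List A} (h : WellMatched k s) :
    callCount k s = retCount k s := by
  induction h with
  | nil => rfl
  | int ha _ ih => simp [ha, ih]
  | matched hc hr _ _ ih ih' =>
    simp only [callCount_cons, callCount_append, retCount_cons, retCount_append, hc, hr, ih, ih',
      reduceCtorEq, ↓reduceIte, add_zero]
    omega

lemma WellMatched.retCount_le_callCount_of_prefix {s p : List A} (h : WellMatched k s)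
    (hp : p <+: s) : retCount k p ≤ callCount k p := by
  induction h generalizing p with
  | nil => simp [List.prefix_nil.mp hp]
  | int ha _ ih =>
    rcases List.prefix_cons_iff.mp hp with rfl | ⟨t, rfl, ht⟩
    · simp
    · simpa [ha] using ih ht
  | @matched c r s s' hc hr hs _ ih ih' =>
    rcases List.prefix_cons_iff.mp hp with rfl | ⟨t, rfl, ht⟩
    · simp
    rcases List.prefix_or_eq_append_of_prefix_append ht with ht | ⟨q, hq, rfl⟩
    · simpa [hc] using (ih ht).trans (Nat.le_succ _)
    rcases List.prefix_cons_iff.mp hq with rfl | ⟨u, rfl, hu⟩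
    · simp [hc, hs.callCount_eq_retCount]
    · have := ih' hu
      simp only [callCount_cons, callCount_append, retCount_cons, retCount_append, hc, hr,
        hs.callCount_eq_retCount, reduceCtorEq, ↓reduceIte, add_zero]
      omega

lemma WellMatched.callCount_lt_retCount_of_append_cons {p q : List A} {c : A}
    (h : WellMatched k (p ++ c :: q)) (hc : k c = .call) :
    callCount k q < retCount k q := by
  have hbal := h.callCount_eq_retCount
  have hp := h.retCount_le_callCount_of_prefix (List.prefix_append p _)
  simp only [callCount_append, callCount_cons, retCount_append, retCount_cons, hc, reduceCtorEq,
    ↓reduceIte, add_zero] at hbal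
  omega

end Counting

section Slices

variable {A : Type*} (σ : ℕ → A)

lemma wordSlice_append {a b c : ℕ} (hab : a ≤ b) (hbc : b ≤ c) :
    wordSlice σ a b ++ wordSlice σ b c = wordSlice σ a c := by
  rw [wordSlice, wordSlice, wordSlice, show c - a = (b - a) + (c - b) by omega, List.range_add]
  simp only [List.map_append, List.map_map, Function.comp_def, ← Nat.add_assoc,
    Nat.add_sub_cancel' hab]

lemma wordSlice_eq_cons {a b : ℕ} (hab : a < b) :
    wordSlice σ a b = σ a :: wordSlice σ (a + 1) b := by
  rw [wordSlice, wordSlice, show b - a = (b - (a + 1)) + 1 by omega, List.range_succ_eq_map]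
  simp only [List.map_cons, List.map_map, Function.comp_def, Nat.add_zero, Nat.add_right_comm,
    Nat.add_assoc]

lemma wordSlice_prefix {a b c : ℕ} (hab : a ≤ b) (hbc : b ≤ c) :
    wordSlice σ a b <+: wordSlice σ a c :=
  ⟨_, wordSlice_append σ hab hbc⟩

end Slices

theorem matchRet_nested_general {A : Type*} (k : A → SymKind) (σ : ℕ → A)
    {i j i' j' : ℕ} (hm : MatchRet k σ i j)
    (hc' : k (σ i') = SymKind.call) (h1 : i < i') (h2 : i' < j)
    (hm' : MatchRet k σ i' j') : j' < j := by
  by_contra! hle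
  have hsplit : wordSlice σ (i + 1) j =
      wordSlice σ (i + 1) i' ++ σ i' :: wordSlice σ (i' + 1) j := by
    rw [← wordSlice_eq_cons σ h2, wordSlice_append σ h1 h2.le]
  have hmore := (hsplit ▸ hm.2.2).callCount_lt_retCount_of_append_cons hc'
  have hless := hm'.2.2.retCount_le_callCount_of_prefix (wordSlice_prefix σ h2 hle)
  omega

/-- matched call-return pairs are well-nested: the matching return
of a call `i'` lying strictly between a call `i` and its matching return `j`
is strictly smaller than `j`. -/
theorem matchRet_nested {A : Type*} (k : A → SymKind) (σ : ℕ → A)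
    {i j i' j' : ℕ} (hc : k (σ i) = SymKind.call) (hm : MatchRet k σ i j)
    (hc' : k (σ i') = SymKind.call) (h1 : i < i') (h2 : i' < j)
    (hm' : MatchRet k σ i' j') : j' < j :=
  matchRet_nested_general k σ hm hc' h1 h2 hm'
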